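/- For every k > 0 and every y ≥ 0, the hybrid Poisson reparameterized data-fit χ_{k,y} is convex on ℝ. -/

import Mathlib

/-!
Both branches are differentiable, and at the junction `θ = 1/k` they agree together with their
first derivatives (`1/k + y log k` and `1 - y k`), so `χ_{k,y}` is differentiable on all of `ℝ`
with derivative `exp (kθ - 1) - y k` for `θ ≤ 1/k` and `1 - y/θ` for `θ > 1/k`. Each of these is
nondecreasing (the second because `y ≥ 0` and `θ > 0`), and they meet at `1 - y k`, so the
derivative is monotone and `χ_{k,y}` is convex.
-/

open Real Set

theorem hasDerivAt_ite_le {f g f' g' : ℝ → ℝ} {a : ℝ}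
    (hf : ∀ x ≤ a, HasDerivAt f (f' x) x) (hg : ∀ x, a ≤ x → HasDerivAt g (g' x) x)
    (hfg : f a = g a) (hfg' : f' a = g' a) (x : ℝ) :
    HasDerivAt (fun t => if t ≤ a then f t else g t) (if x ≤ a then f' x else g' x) x := by
  rcases lt_trichotomy x a with hxa | rfl | hax
  · rw [if_pos hxa.le]
    refine (hf x hxa.le).congr_of_eventuallyEq ?_
    filter_upwards [Iio_mem_nhds hxa] with t ht
    rw [if_pos (le_of_lt ht)]
  · rw [if_pos le_rfl]
    have hleft : HasDerivWithinAt (fun t => if t ≤ x then f t else g t) (f' x) (Iic x) x :=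
      (hf x le_rfl).hasDerivWithinAt.congr (fun t ht => if_pos ht) (if_pos le_rfl)
    have hright : HasDerivWithinAt (fun t => if t ≤ x then f t else g t) (f' x) (Ici x) x := by
      refine hfg' ▸ (hg x le_rfl).hasDerivWithinAt.congr (fun t ht => ?_)
        (by rw [if_pos le_rfl, hfg])
      rcases (mem_Ici.1 ht).eq_or_lt with rfl | hxt
      · rw [if_pos le_rfl, hfg]
      · rw [if_neg hxt.not_ge]
    simpa only [Iic_union_Ici, hasDerivWithinAt_univ] using hleft.union hright
  · rw [if_neg hax.not_ge]
    refine (hg x hax.le).congr_of_eventuallyEq ?_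
    filter_upwards [Ioi_mem_nhds hax] with t ht
    rw [if_neg ht.not_ge]

theorem monotone_ite_le {f g : ℝ → ℝ} {a : ℝ} (hf : MonotoneOn f (Iic a))
    (hg : MonotoneOn g (Ici a)) (hfg : f a ≤ g a) :
    Monotone (fun t => if t ≤ a then f t else g t) := by
  intro s t hst
  dsimp only
  split_ifs with hs ht ht
  · exact hf hs ht hst
  · have hat : a ≤ t := le_of_not_ge ht
    exact (hf hs self_mem_Iic hs).trans (hfg.trans (hg self_mem_Ici hat hat))
  · exact absurd (hst.trans ht) hs
  · exact hg (le_of_not_ge hs) (le_of_not_ge ht) hst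

theorem convexOn_univ_of_hasDerivAt {f f' : ℝ → ℝ} (hf : ∀ x, HasDerivAt f (f' x) x)
    (hf' : Monotone f') : ConvexOn ℝ univ f :=
  Monotone.convexOn_univ_of_deriv (fun x => (hf x).differentiableAt)
    (by rwa [funext fun x => (hf x).deriv])

theorem hasDerivAt_exp_branch {k : ℝ} (hk : k ≠ 0) (y x : ℝ) :
    HasDerivAt (fun θ => (1 / k) * exp (k * θ - 1) - y * (k * θ - log k - 1))
      (exp (k * x - 1) - y * k) x := by
  have hlin : HasDerivAt (fun θ => k * θ - 1) k x := by
    simpa using ((hasDerivAt_id x).const_mul k).sub_const 1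
  have hlin' : HasDerivAt (fun θ => y * (k * θ - log k - 1)) (y * k) x := by
    simpa using (((hasDerivAt_id x).const_mul k).sub_const (log k) |>.sub_const 1).const_mul y
  exact ((hlin.exp.const_mul (1 / k)).sub hlin').congr_deriv (by field_simp)

theorem hasDerivAt_sub_mul_log (y : ℝ) {x : ℝ} (hx : x ≠ 0) :
    HasDerivAt (fun θ => θ - y * log θ) (1 - y / x) x :=
  ((hasDerivAt_id' x).sub ((hasDerivAt_log hx).const_mul y)).congr_deriv (by rw [div_eq_mul_inv])

theorem monotone_exp_branch_deriv {k : ℝ} (hk : 0 ≤ k) (y : ℝ) :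
    Monotone (fun θ => exp (k * θ - 1) - y * k) := fun _ _ h => by
  dsimp only
  gcongr

theorem monotoneOn_one_sub_div {y : ℝ} (hy : 0 ≤ y) :
    MonotoneOn (fun θ => 1 - y / θ) (Ioi 0) := fun _ hs _ _ h => by
  have := div_le_div_of_nonneg_left hy hs h
  simp only
  linarith

/-- **Hybrid Poisson reparameterized data-fit is convex.**
For every k > 0 and every y ≥ 0, the hybrid Poisson reparameterized data-fit
χ_{k,y} is convex on ℝ. -/
theorem poisson_hybrid_datafit_convex
    (k : ℝ) (hk : 0 < k) (y : ℝ) (hy : 0 ≤ y) :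
    ConvexOn ℝ Set.univ (fun θ : ℝ =>
      if θ ≤ 1 / k then
        (1 / k) * Real.exp (k * θ - 1) - y * (k * θ - Real.log k - 1)
      else θ - y * Real.log θ) := by
  have hIci : Ici (1 / k) ⊆ Ioi 0 := fun θ hθ => (one_div_pos.2 hk).trans_le hθ
  have hjunction : k * (1 / k) - 1 = 0 := by field_simp; ring
  have hvalue : (1 / k) * exp (k * (1 / k) - 1) - y * (k * (1 / k) - log k - 1) =
      1 / k - y * log (1 / k) := by
    rw [hjunction, exp_zero, one_div, log_inv, mul_inv_cancel₀ hk.ne']; ring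
  have hslope : exp (k * (1 / k) - 1) - y * k = 1 - y / (1 / k) := by
    rw [hjunction, exp_zero, div_div_eq_mul_div, div_one]
  exact convexOn_univ_of_hasDerivAt
    (hasDerivAt_ite_le (fun x _ => hasDerivAt_exp_branch hk.ne' y x)
      (fun x hx => hasDerivAt_sub_mul_log y (hIci hx).ne') hvalue hslope)
    (monotone_ite_le ((monotone_exp_branch_deriv hk.le y).monotoneOn _)
      ((monotoneOn_one_sub_div hy).mono hIci) hslope.le)
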